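/- arXiv:2001.00410 — 2 statements merged into one kernel-verified Lean document; each statement's English description precedes it below -/
import Mathlib

section
/- Let m > 0, let H : (0,∞) → ℝ be twice differentiable, set N(t) = exp((2/m) H(t)), I(t) = H'(t), and define the W-entropy W(t) = H(t) - (m/2) log(4πe t) + t H'(t) - m/2 (so that W(t) = (d/dt)(t (H(t) - (m/2) log(4πe t)))). Then W is differentiable on (0,∞) and for every t > 0 the NIW formula holds: N''(t) = (2 N(t)/m) [ (2/m)(I(t) - m/(2t))² + (1/t) W'(t) ]. -/
/-! Both sides are computed explicitly: `N'' = ((2/m) H'' + (2/m)² H'²) N` and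
`W' = 2H' - m/(2t) + t H''`. Expanding the square `(H' - m/(2t))²`, its cross term `-(m/t) H'` and
constant `m²/(4t²)` cancel against `2H'/t - m/(2t²)` coming from `W'/t`. -/

open Real Filter Topology

section EntropyPower

variable {H : ℝ → ℝ} {t : ℝ}

theorem deriv_exp_const_mul_comp_eventuallyEq (c : ℝ)
    (hH : ∀ᶠ s in 𝓝 t, DifferentiableAt ℝ H s) :
    deriv (fun s => exp (c * H s)) =ᶠ[𝓝 t] fun s => c * deriv H s * exp (c * H s) := by
  filter_upwards [hH] with s hs
  simpa [mul_comm] using ((hs.hasDerivAt.const_mul c).exp).deriv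

theorem deriv_deriv_exp_const_mul_comp (c : ℝ)
    (hH : ∀ᶠ s in 𝓝 t, DifferentiableAt ℝ H s) (hH' : DifferentiableAt ℝ (deriv H) t) :
    deriv (deriv fun s => exp (c * H s)) t =
      (c * deriv (deriv H) t + (c * deriv H t) ^ 2) * exp (c * H t) := by
  have hexp : HasDerivAt (fun s => exp (c * H s)) (exp (c * H t) * (c * deriv H t)) t :=
    (hH.self_of_nhds.hasDerivAt.const_mul c).exp
  have hprod : HasDerivAt (fun s => c * deriv H s * exp (c * H s))
      (c * deriv (deriv H) t * exp (c * H t) + c * deriv H t * (exp (c * H t) * (c * deriv H t)))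
      t :=
    (hH'.hasDerivAt.const_mul c).mul hexp
  rw [(deriv_exp_const_mul_comp_eventuallyEq c hH).deriv_eq, hprod.deriv]
  ring

end EntropyPower

theorem hasDerivAt_log_const_mul {a t : ℝ} (ha : a ≠ 0) (ht : t ≠ 0) :
    HasDerivAt (fun s => log (a * s)) t⁻¹ t := by
  have hlin : HasDerivAt (fun s => a * s) a t := by
    simpa using (hasDerivAt_id t).const_mul a
  convert hlin.log (mul_ne_zero ha ht) using 1
  field_simp

theorem hasDerivAt_W_entropy {H : ℝ → ℝ} {t : ℝ} (m : ℝ) {a : ℝ} (ha : a ≠ 0) (ht : t ≠ 0)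
    (hH : DifferentiableAt ℝ H t) (hH' : DifferentiableAt ℝ (deriv H) t) :
    HasDerivAt (fun s => H s - m / 2 * log (a * s) + s * deriv H s - m / 2)
      (2 * deriv H t - m / (2 * t) + t * deriv (deriv H) t) t := by
  have hprod : HasDerivAt (fun s => s * deriv H s) (1 * deriv H t + t * deriv (deriv H) t) t :=
    (hasDerivAt_id t).mul hH'.hasDerivAt
  refine (((hH.hasDerivAt.sub ((hasDerivAt_log_const_mul ha ht).const_mul (m / 2))).add
    hprod).sub_const (m / 2)).congr_deriv ?_
  field_simp
  ring

/-- The NIW formula relating the Shannon entropy power `N = exp((2/m)H)`, the Fisher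
information `I = H'` and the `W`-entropy `W(t) = (d/dt)(t(H(t) - (m/2)log(4πe t)))`:
`N'' = (2N/m) [ (2/m)(I - m/(2t))² + (1/t) W' ]`. -/
theorem NIW_formula (m : ℝ) (hm : 0 < m) (H : ℝ → ℝ)
    (hH : ∀ t : ℝ, 0 < t → DifferentiableAt ℝ H t)
    (hH' : ∀ t : ℝ, 0 < t → DifferentiableAt ℝ (deriv H) t)
    (N I W : ℝ → ℝ)
    (hN : ∀ t : ℝ, N t = Real.exp ((2 / m) * H t))
    (hI : ∀ t : ℝ, I t = deriv H t)
    (hW : ∀ t : ℝ, W t =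
      H t - (m / 2) * Real.log (4 * π * Real.exp 1 * t) + t * deriv H t - m / 2) :
    ∀ t : ℝ, 0 < t →
      DifferentiableAt ℝ W t ∧
      deriv (deriv N) t =
        (2 * N t / m) *
          ((2 / m) * (I t - m / (2 * t)) ^ 2 + (1 / t) * deriv W t) := by
  intro t ht
  have hN'' : deriv (deriv N) t =
      (2 / m * deriv (deriv H) t + (2 / m * deriv H t) ^ 2) * N t := by
    rw [funext hN]
    exact deriv_deriv_exp_const_mul_comp _
      (eventually_gt_nhds ht |>.mono hH) (hH' t ht)
  have hW' : HasDerivAt W (2 * deriv H t - m / (2 * t) + t * deriv (deriv H) t) t := by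
    rw [funext hW]
    exact hasDerivAt_W_entropy m (by positivity) ht.ne' (hH t ht) (hH' t ht)
  refine ⟨hW'.differentiableAt, ?_⟩
  rw [hN'', hW'.deriv, hI]
  field_simp
  ring
end

section
/- Let n ≥ 1, let m > n be a real number, let K ∈ ℝ, and let φ : ℝⁿ → ℝ be smooth with ∇²φ - (∇φ ⊗ ∇φ)/(m-n) ≥ K·Id pointwise (the curvature-dimension condition CD(K,m) on ℝⁿ). Let u : ℝⁿ → ℝ be smooth and strictly positive with ∫_{ℝⁿ} u e^{-φ} dx = 1, and assume that ‖∇² log u‖²_{HS} u e^{-φ}, (∇²φ)(∇log u, ∇log u) u e^{-φ}, (L log u)² u e^{-φ}, and |∇ log u|² u e^{-φ} are integrable, and that the integration-by-parts identity ∫ (L log u) u e^{-φ} dx = -∫ |∇ log u|² u e^{-φ} dx holds, where L log u = Δ log u - ⟨∇φ, ∇ log u⟩. Then ∫_{ℝⁿ} ( ‖∇² log u‖²_{HS} + (∇²φ)(∇ log u, ∇ log u) ) u e^{-φ} dx ≥ (1/m) ( ∫_{ℝⁿ} |∇ log u|² u e^{-φ} dx )² + K ∫_{ℝⁿ} |∇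 log u|² u e^{-φ} dx. -/
open Real MeasureTheory

/-- The Hessian matrix of a function on `ℝⁿ`. -/
noncomputable def hessianMatrix (n : ℕ) (g : EuclideanSpace ℝ (Fin n) → ℝ)
    (x : EuclideanSpace ℝ (Fin n)) : Matrix (Fin n) (Fin n) ℝ :=
  fun i j => iteratedFDeriv ℝ 2 g x ![EuclideanSpace.single i 1, EuclideanSpace.single j 1]

/-- The squared Hilbert–Schmidt (Frobenius) norm of the Hessian of a function on `ℝⁿ`. -/
noncomputable def hessianHSsq (n : ℕ) (g : EuclideanSpace ℝ (Fin n) → ℝ)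
    (x : EuclideanSpace ℝ (Fin n)) : ℝ :=
  ∑ i, ∑ j, (hessianMatrix n g x i j) ^ 2

/-- The Laplacian of a function on `ℝⁿ`, i.e. the trace of its Hessian. -/
noncomputable def laplacian (n : ℕ) (g : EuclideanSpace ℝ (Fin n) → ℝ)
    (x : EuclideanSpace ℝ (Fin n)) : ℝ :=
  ∑ i, hessianMatrix n g x i i

/-- The quadratic form `(∇²φ)(∇g, ∇g)` on `ℝⁿ`. -/
noncomputable def hessQuad (n : ℕ) (φ g : EuclideanSpace ℝ (Fin n) → ℝ)
    (x : EuclideanSpace ℝ (Fin n)) : ℝ :=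
  ∑ i, ∑ j, hessianMatrix n φ x i j * gradient g x i * gradient g x j

/-- The Witten Laplacian `Lg = Δg - ⟨∇φ, ∇g⟩` on `ℝⁿ` with potential `φ`. -/
noncomputable def wittenL (n : ℕ) (φ g : EuclideanSpace ℝ (Fin n) → ℝ)
    (x : EuclideanSpace ℝ (Fin n)) : ℝ :=
  laplacian n g x - (inner ℝ (gradient φ x) (gradient g x) : ℝ)

/-- Abstract integral step: Cauchy–Schwarz (variance) plus pointwise bound. -/
lemma integral_aux {X : Type*} [MeasureSpace X] (m K : ℝ) (hm : 0 < m)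
    (L N H w : X → ℝ) (hw0 : ∀ x, 0 ≤ w x)
    (hmeas : AEStronglyMeasurable (fun x => L x * w x) volume)
    (hw_int : Integrable w) (hw_norm : ∫ x, w x = 1)
    (hint_L : Integrable (fun x => (L x) ^ 2 * w x))
    (hint_N : Integrable (fun x => N x * w x))
    (hint_H : Integrable (fun x => H x * w x))
    (hpt : ∀ x, (1 / m) * (L x) ^ 2 + K * N x ≤ H x)
    (hibp : ∫ x, L x * w x = -∫ x, N x * w x) :
    (1 / m) * (∫ x, N x * w x) ^ 2 + K * ∫ x, N x * w x ≤ ∫ x, H x * w x := by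
  set c : ℝ := ∫ x, L x * w x with hc
  -- integrability of L·w
  have hLw_int : Integrable (fun x => L x * w x) := by
    refine Integrable.mono' (((hint_L.add hw_int).const_mul (1/2))) hmeas ?_
    filter_upwards with x
    have h1 : |L x| ≤ ((L x) ^ 2 + 1) / 2 := by nlinarith [sq_nonneg (|L x| - 1), sq_abs (L x)]
    have h2 : |L x| * w x ≤ ((L x) ^ 2 + 1) / 2 * w x :=
      mul_le_mul_of_nonneg_right h1 (hw0 x)
    rw [norm_mul, Real.norm_eq_abs, Real.norm_eq_abs, abs_of_nonneg (hw0 x)]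
    calc |L x| * w x ≤ ((L x) ^ 2 + 1) / 2 * w x := h2
      _ = 1/2 * ((L x) ^ 2 * w x + w x) := by ring
  -- variance inequality: c^2 ≤ ∫ L² w
  have hvar : 0 ≤ ∫ x, ((L x - c) ^ 2 * w x) :=
    integral_nonneg fun x => mul_nonneg (sq_nonneg _) (hw0 x)
  have hexp : (fun x => (L x - c) ^ 2 * w x)
      = fun x => ((L x) ^ 2 * w x - 2 * c * (L x * w x)) + c ^ 2 * w x := by
    funext x; ring
  have hI1 : Integrable (fun x => (L x) ^ 2 * w x - 2 * c * (L x * w x)) :=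
    hint_L.sub (hLw_int.const_mul (2 * c))
  have hI2 : Integrable (fun x => 2 * c * (L x * w x)) := hLw_int.const_mul (2 * c)
  have hI3 : Integrable (fun x => c ^ 2 * w x) := hw_int.const_mul (c ^ 2)
  rw [hexp, integral_add hI1 hI3, integral_sub hint_L hI2, integral_const_mul,
    integral_const_mul, hw_norm] at hvar
  have hcs : c ^ 2 ≤ ∫ x, (L x) ^ 2 * w x := by nlinarith [hvar]
  -- pointwise → integral
  have hlhs_int : Integrable (fun x => (1 / m) * ((L x) ^ 2 * w x) + K * (N x * w x)) :=
    (hint_L.const_mul _).add (hint_N.const_mul _)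
  have hmono : ∫ x, ((1 / m) * ((L x) ^ 2 * w x) + K * (N x * w x)) ≤ ∫ x, H x * w x := by
    refine integral_mono hlhs_int hint_H fun x => ?_
    have h := mul_le_mul_of_nonneg_right (hpt x) (hw0 x)
    calc (1 / m) * ((L x) ^ 2 * w x) + K * (N x * w x)
        = ((1 / m) * (L x) ^ 2 + K * N x) * w x := by ring
      _ ≤ H x * w x := h
  have hI4 : Integrable (fun x => (1 / m) * ((L x) ^ 2 * w x)) := hint_L.const_mul _
  have hI5 : Integrable (fun x => K * (N x * w x)) := hint_N.const_mul _
  rw [integral_add hI4 hI5, integral_const_mul, integral_const_mul] at hmono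
  have hA : (∫ x, N x * w x) ^ 2 = c ^ 2 := by rw [hibp]; ring
  have h1m : (0:ℝ) ≤ 1 / m := by positivity
  nlinarith [mul_le_mul_of_nonneg_left hcs h1m]

/-- Pointwise algebraic step: `a²/n + b²/(m-n) ≥ (a-b)²/m`. -/
lemma pointwise_aux (n m a b H S : ℝ) (hn : 0 < n) (hmn : 0 < m - n)
    (h1 : a ^ 2 ≤ n * H) (h2 : b ^ 2 ≤ (m - n) * S) :
    (1 / m) * (a - b) ^ 2 ≤ H + S := by
  have hm : 0 < m := by linarith
  have key : (a - b) ^ 2 ≤ m * (H + S) := by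
    nlinarith [sq_nonneg ((m - n) * a + n * b),
      mul_le_mul_of_nonneg_left h1 (mul_pos hm hmn).le,
      mul_le_mul_of_nonneg_left h2 (mul_pos hm hn).le, mul_pos hn hmn]
  calc (1 / m) * (a - b) ^ 2 ≤ (1 / m) * (m * (H + S)) :=
        mul_le_mul_of_nonneg_left key (by positivity)
    _ = H + S := by field_simp


/-- The integral Bakry–Émery inequality on weighted Euclidean space under the
CD(K,m) condition: this is the entropy differential inequality
`H'' + (2/m)H'² + 2KH' ≤ 0` of the paper's Theorem 2 at a fixed time. -/
theorem integral_bakry_emery_CD (n : ℕ) (hn : 1 ≤ n) (m : ℝ) (hm : (n : ℝ) < m) (K : ℝ)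
    (φ : EuclideanSpace ℝ (Fin n) → ℝ) (hφ : ContDiff ℝ (⊤ : ℕ∞) φ)
    (hCD : ∀ x ξ : EuclideanSpace ℝ (Fin n),
      K * ‖ξ‖ ^ 2 ≤ (∑ i, ∑ j, hessianMatrix n φ x i j * ξ i * ξ j)
        - (inner ℝ (gradient φ x) ξ : ℝ) ^ 2 / (m - n))
    (u : EuclideanSpace ℝ (Fin n) → ℝ) (hu : ContDiff ℝ (⊤ : ℕ∞) u) (hu_pos : ∀ x, 0 < u x)
    (hu_norm : ∫ x, u x * Real.exp (-φ x) = 1)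
    (hint_hess : Integrable (fun x =>
      hessianHSsq n (fun y => Real.log (u y)) x * (u x * Real.exp (-φ x))))
    (hint_quad : Integrable (fun x =>
      hessQuad n φ (fun y => Real.log (u y)) x * (u x * Real.exp (-φ x))))
    (hint_L : Integrable (fun x =>
      (wittenL n φ (fun y => Real.log (u y)) x) ^ 2 * (u x * Real.exp (-φ x))))
    (hint_grad : Integrable (fun x =>
      ‖gradient (fun y => Real.log (u y)) x‖ ^ 2 * (u x * Real.exp (-φ x))))
    (hibp : ∫ x, wittenL n φ (fun y => Real.log (u y)) x * (u x * Real.exp (-φ x)) =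
      -∫ x, ‖gradient (fun y => Real.log (u y)) x‖ ^ 2 * (u x * Real.exp (-φ x))) :
    (1 / m) * (∫ x, ‖gradient (fun y => Real.log (u y)) x‖ ^ 2
          * (u x * Real.exp (-φ x))) ^ 2
      + K * ∫ x, ‖gradient (fun y => Real.log (u y)) x‖ ^ 2 * (u x * Real.exp (-φ x)) ≤
    ∫ x, (hessianHSsq n (fun y => Real.log (u y)) x
        + hessQuad n φ (fun y => Real.log (u y)) x) * (u x * Real.exp (-φ x)) := by
  have hn0 : (0:ℝ) < n := by exact_mod_cast hn
  have hmn : (0:ℝ) < m - n := sub_pos.mpr hm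
  have hm0 : (0:ℝ) < m := by linarith
  set g : EuclideanSpace ℝ (Fin n) → ℝ := fun y => Real.log (u y) with hgdef
  have hg : ContDiff ℝ (⊤ : ℕ∞) g := hu.log fun x => (hu_pos x).ne'
  -- continuity facts
  have hM_cont : ∀ i j, Continuous (fun x => hessianMatrix n g x i j) := fun i j =>
    (continuous_eval_const _).comp (hg.continuous_iteratedFDeriv (WithTop.coe_le_coe.mpr le_top))
  have hgrad_cont : Continuous (fun x => gradient g x) :=
    (InnerProductSpace.toDual ℝ _).symm.continuous.comp (hg.continuous_fderiv (by simp))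
  have hgradφ_cont : Continuous (fun x => gradient φ x) :=
    (InnerProductSpace.toDual ℝ _).symm.continuous.comp (hφ.continuous_fderiv (by simp))
  have hL_cont : Continuous (wittenL n φ g) := by
    unfold wittenL laplacian
    exact (continuous_finset_sum _ fun i _ => hM_cont i i).sub
      (hgradφ_cont.inner hgrad_cont)
  have hw_cont : Continuous (fun x => u x * Real.exp (-φ x)) :=
    hu.continuous.mul (hφ.continuous.neg.rexp)
  have hw0 : ∀ x, 0 ≤ u x * Real.exp (-φ x) :=
    fun x => mul_nonneg (hu_pos x).le (exp_nonneg _)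
  have hw_int : Integrable (fun x => u x * Real.exp (-φ x)) := by
    by_contra h
    rw [integral_undef h] at hu_norm
    exact one_ne_zero hu_norm.symm
  -- pointwise inequality
  have hpt : ∀ x, (1 / m) * (wittenL n φ g x) ^ 2 + K * ‖gradient g x‖ ^ 2
      ≤ hessianHSsq n g x + hessQuad n φ g x := by
    intro x
    set a := laplacian n g x with ha
    set b := (inner ℝ (gradient φ x) (gradient g x) : ℝ) with hb
    have h1 : a ^ 2 ≤ (n : ℝ) * hessianHSsq n g x := by
      have hcs : (∑ i, hessianMatrix n g x i i) ^ 2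
          ≤ (((Finset.univ : Finset (Fin n)).card : ℕ) : ℝ) * ∑ i, (hessianMatrix n g x i i) ^ 2 := by
        exact_mod_cast sq_sum_le_card_mul_sum_sq
          (s := (Finset.univ : Finset (Fin n))) (f := fun i => hessianMatrix n g x i i)
      have hdiag : ∑ i, (hessianMatrix n g x i i) ^ 2 ≤ hessianHSsq n g x :=
        Finset.sum_le_sum fun i _ =>
          Finset.single_le_sum (f := fun j => (hessianMatrix n g x i j) ^ 2)
            (fun j _ => sq_nonneg _) (Finset.mem_univ i)
      have hHnn : 0 ≤ ∑ i, (hessianMatrix n g x i i) ^ 2 :=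
        Finset.sum_nonneg fun i _ => sq_nonneg _
      calc a ^ 2 = (∑ i, hessianMatrix n g x i i) ^ 2 := by rw [ha]; rfl
        _ ≤ (((Finset.univ : Finset (Fin n)).card : ℕ) : ℝ) * ∑ i, (hessianMatrix n g x i i) ^ 2 := hcs
        _ = (n : ℝ) * ∑ i, (hessianMatrix n g x i i) ^ 2 := by simp
        _ ≤ (n : ℝ) * hessianHSsq n g x := by
            exact mul_le_mul_of_nonneg_left hdiag hn0.le
    have h2 : b ^ 2 ≤ (m - n) * (hessQuad n φ g x - K * ‖gradient g x‖ ^ 2) := by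
      have := hCD x (gradient g x)
      have hq : (∑ i, ∑ j, hessianMatrix n φ x i j * gradient g x i * gradient g x j)
          = hessQuad n φ g x := rfl
      rw [hq] at this
      have : b ^ 2 / (m - n) ≤ hessQuad n φ g x - K * ‖gradient g x‖ ^ 2 := by
        rw [hb]; linarith
      calc b ^ 2 = b ^ 2 / (m - n) * (m - n) := by field_simp
        _ ≤ (hessQuad n φ g x - K * ‖gradient g x‖ ^ 2) * (m - n) :=
            mul_le_mul_of_nonneg_right this hmn.le
        _ = (m - n) * (hessQuad n φ g x - K * ‖gradient g x‖ ^ 2) := mul_comm _ _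
    have hkey := pointwise_aux (n : ℝ) m a b (hessianHSsq n g x)
      (hessQuad n φ g x - K * ‖gradient g x‖ ^ 2) hn0 hmn h1 h2
    have hLab : wittenL n φ g x = a - b := rfl
    rw [hLab]; linarith
  -- apply the abstract lemma
  have := integral_aux m K hm0 (wittenL n φ g) (fun x => ‖gradient g x‖ ^ 2)
    (fun x => hessianHSsq n g x + hessQuad n φ g x) (fun x => u x * Real.exp (-φ x))
    hw0 ((hL_cont.mul hw_cont).aestronglyMeasurable) hw_int hu_norm hint_L hint_grad
    ?_ hpt hibp
  · exact this
  · have heq : (fun x => (hessianHSsq n g x + hessQuad n φ g x) * (u x * Real.exp (-φ x)))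
        = fun x => hessianHSsq n g x * (u x * Real.exp (-φ x))
          + hessQuad n φ g x * (u x * Real.exp (-φ x)) := by
      funext x; ring
    rw [heq]
    exact hint_hess.add hint_quad
end
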